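/- arXiv:2205.14464 — 2 statements merged into one kernel-verified Lean document; each statement's English description precedes it below -/
import Mathlib

section
/- Let α, β, d > 0, q_min ≤ q_i ≤ q_max, q_min ≤ q_j ≤ q_max, and set λ₁ := (q_max − q_i)/(β d), λ₂ := (q_max − q_j)/(α d). Suppose λ₁ ≥ 0, λ₂ ≥ 0, λ₁ + λ₂ ≤ 1 and q_max − (α β/(α + β))·(1 − λ₁ − λ₂)·d ≥ q_min. Then the piecewise-linear profile consisting of four consecutive segments of lengths λ₁ d (slope β), (β/(α + β))(1 − λ₁ − λ₂) d (slope −α), (α/(α + β))(1 − λ₁ − λ₂) d (slope β), and λ₂ d (slope −α) starts at q_i, ends at q_j, attains maximum value exactly q_max, remains in [q_min, q_max] throughout, and has total gasoline distance λ d where λ = λ₁ + (α/(α + β))(1 − λ₁ − λ₂). In particular, an edge requiring both recharging to full and respecting the charge cap can always be traversed with at most three mode-switch points. -/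
/-- Under `λ₁, λ₂ ≥ 0`, `λ₁ + λ₂ ≤ 1` and
`q_max − (α β/(α + β))·(1 − λ₁ − λ₂)·d ≥ q_min`, the four-segment piecewise-linear profile
with segments of lengths `λ₁ d` (slope `β`), `(β/(α+β))(1−λ₁−λ₂) d` (slope `−α`),
`(α/(α+β))(1−λ₁−λ₂) d` (slope `β`), and `λ₂ d` (slope `−α`) starts at `q_i`, ends at `q_j`,
attains the value `q_max`, remains in `[q_min, q_max]`, and has total gasoline distance
`λ d` with `λ = λ₁ + (α/(α+β))(1−λ₁−λ₂)`; in particular the edge is traversed with at most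
three mode-switch points. -/
theorem four_segment_profile_feasible
    (α β d qi qj qmin qmax : ℝ) (hα : 0 < α) (hβ : 0 < β) (hd : 0 < d)
    (hq' : qmin < qmax)
    (hi : qmin ≤ qi) (hi' : qi ≤ qmax) (hj : qmin ≤ qj) (hj' : qj ≤ qmax)
    (hl1 : 0 ≤ (qmax - qi) / (β * d))
    (hl2 : 0 ≤ (qmax - qj) / (α * d))
    (hsum : (qmax - qi) / (β * d) + (qmax - qj) / (α * d) ≤ 1)
    (hfloor : qmin ≤ qmax - (α * β / (α + β)) *
      (1 - (qmax - qi) / (β * d) - (qmax - qj) / (α * d)) * d) :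
    let lam1 : ℝ := (qmax - qi) / (β * d)
    let lam2 : ℝ := (qmax - qj) / (α * d)
    let s1 : ℝ := lam1 * d
    let s2 : ℝ := (β / (α + β)) * (1 - lam1 - lam2) * d
    let s3 : ℝ := (α / (α + β)) * (1 - lam1 - lam2) * d
    let q : ℝ → ℝ := fun s =>
      if s ≤ s1 then qi + β * s
      else if s ≤ s1 + s2 then qmax - α * (s - s1)
      else if s ≤ s1 + s2 + s3 then (qmax - α * s2) + β * (s - (s1 + s2))
      else qmax - α * (s - (s1 + s2 + s3))
    q 0 = qi ∧ q d = qj ∧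
      (∃ s ∈ Set.Icc (0 : ℝ) d, q s = qmax) ∧
      (∀ s ∈ Set.Icc (0 : ℝ) d, qmin ≤ q s ∧ q s ≤ qmax) ∧
      s1 + s3 = (lam1 + (α / (α + β)) * (1 - lam1 - lam2)) * d := by
  have hαβ : (0:ℝ) < α + β := by linarith
  have hβd : (0:ℝ) < β * d := mul_pos hβ hd
  have hαd : (0:ℝ) < α * d := mul_pos hα hd
  intro lam1 lam2 s1 s2 s3 q
  have hq : ∀ s, q s =
      if s ≤ s1 then qi + β * s
      else if s ≤ s1 + s2 then qmax - α * (s - s1)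
      else if s ≤ s1 + s2 + s3 then (qmax - α * s2) + β * (s - (s1 + s2))
      else qmax - α * (s - (s1 + s2 + s3)) := fun s => rfl
  have hl1' : 0 ≤ lam1 := hl1
  have hl2' : 0 ≤ lam2 := hl2
  have hL : 0 ≤ 1 - lam1 - lam2 := by
    have : lam1 + lam2 ≤ 1 := hsum
    linarith
  have e1 : β * s1 = qmax - qi := by
    show β * ((qmax - qi) / (β * d) * d) = qmax - qi
    field_simp
  have e2 : α * (lam2 * d) = qmax - qj := by
    show α * ((qmax - qj) / (α * d) * d) = qmax - qj
    field_simp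
  have e3 : α * s2 = β * s3 := by
    show α * ((β / (α + β)) * (1 - lam1 - lam2) * d) =
      β * ((α / (α + β)) * (1 - lam1 - lam2) * d)
    ring
  have e4 : s1 + s2 + s3 = d - lam2 * d := by
    show lam1 * d + (β / (α + β)) * (1 - lam1 - lam2) * d
        + (α / (α + β)) * (1 - lam1 - lam2) * d = d - lam2 * d
    field_simp
    ring
  have e5 : s1 + s3 = (lam1 + (α / (α + β)) * (1 - lam1 - lam2)) * d := by
    show lam1 * d + (α / (α + β)) * (1 - lam1 - lam2) * d = _
    ring
  have hs1 : 0 ≤ s1 := mul_nonneg hl1' hd.le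
  have hs2 : 0 ≤ s2 :=
    mul_nonneg (mul_nonneg (div_nonneg hβ.le hαβ.le) hL) hd.le
  have hs3 : 0 ≤ s3 :=
    mul_nonneg (mul_nonneg (div_nonneg hα.le hαβ.le) hL) hd.le
  have hlam2d : 0 ≤ lam2 * d := mul_nonneg hl2' hd.le
  have hfloor' : qmin ≤ qmax - α * s2 := by
    have h : α * s2 = α * β / (α + β) * (1 - lam1 - lam2) * d := by
      show α * ((β / (α + β)) * (1 - lam1 - lam2) * d) = _
      ring
    rw [h]; exact hfloor
  clear_value lam1 lam2 s1 s2 s3 q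
  have hq0 : q 0 = qi := by
    rw [hq 0, if_pos hs1]; ring
  have hqd : q d = qj := by
    rw [hq d]
    by_cases h1 : d ≤ s1
    · rw [if_pos h1]
      have hd1 : s1 = d := by linarith
      have hz : lam2 * d = 0 := by linarith
      have hz2 : qmax - qj = 0 := by rw [← e2, hz, mul_zero]
      rw [hd1] at e1
      linarith
    · rw [if_neg h1]
      by_cases h2 : d ≤ s1 + s2
      · rw [if_pos h2]
        have hd2 : s1 + s2 = d := by linarith
        have h30 : s3 = 0 := by linarith
        have hz : lam2 * d = 0 := by linarith
        have hz2 : qmax - qj = 0 := by rw [← e2, hz, mul_zero]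
        have hz3 : α * s2 = 0 := by rw [e3, h30, mul_zero]
        have : α * (d - s1) = α * s2 := by rw [← hd2]; ring
        linarith
      · rw [if_neg h2]
        by_cases h3 : d ≤ s1 + s2 + s3
        · rw [if_pos h3]
          have hd3 : s1 + s2 + s3 = d := by linarith
          have hz : lam2 * d = 0 := by linarith
          have hz2 : qmax - qj = 0 := by rw [← e2, hz, mul_zero]
          have hb : β * (d - (s1 + s2)) = β * s3 := by rw [← hd3]; ring
          linarith [e3]
        · rw [if_neg h3]
          have : α * (d - (s1 + s2 + s3)) = α * (lam2 * d) := by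
            rw [show d - (s1 + s2 + s3) = lam2 * d by linarith]
          linarith [e2]
  refine ⟨hq0, hqd, ⟨s1, ⟨hs1, by linarith⟩, ?_⟩, ?_, e5⟩
  · rw [hq s1, if_pos le_rfl]; linarith
  · rintro s ⟨hs0, hsd⟩
    rw [hq s]
    by_cases h1 : s ≤ s1
    · rw [if_pos h1]
      have hb1 : 0 ≤ β * s := mul_nonneg hβ.le hs0
      have hb2 : β * s ≤ β * s1 := mul_le_mul_of_nonneg_left h1 hβ.le
      exact ⟨by linarith, by linarith⟩
    · rw [if_neg h1]
      push_neg at h1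
      by_cases h2 : s ≤ s1 + s2
      · rw [if_pos h2]
        have hb1 : 0 ≤ α * (s - s1) := mul_nonneg hα.le (by linarith)
        have hb2 : α * (s - s1) ≤ α * s2 :=
          mul_le_mul_of_nonneg_left (by linarith) hα.le
        exact ⟨by linarith, by linarith⟩
      · rw [if_neg h2]
        push_neg at h2
        by_cases h3 : s ≤ s1 + s2 + s3
        · rw [if_pos h3]
          have hb1 : 0 ≤ β * (s - (s1 + s2)) := mul_nonneg hβ.le (by linarith)
          have hb2 : β * (s - (s1 + s2)) ≤ β * s3 :=
            mul_le_mul_of_nonneg_left (by linarith) hβ.le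
          exact ⟨by linarith, by linarith [e3]⟩
        · rw [if_neg h3]
          push_neg at h3
          have hb1 : 0 ≤ α * (s - (s1 + s2 + s3)) := mul_nonneg hα.le (by linarith)
          have hb2 : α * (s - (s1 + s2 + s3)) ≤ α * (d - (s1 + s2 + s3)) :=
            mul_le_mul_of_nonneg_left (by linarith) hα.le
          have hb3 : α * (d - (s1 + s2 + s3)) = qmax - qj := by
            rw [show d - (s1 + s2 + s3) = lam2 * d by linarith, e2]
          exact ⟨by linarith, by linarith⟩
end

section
/- Let α, β, c_f > 0, q_min < q_max, let V be a finite set of vertices with edge lengths d : V × V → ℝ assigning d(u, v) > 0 to each edge, and let p : Fin (n+1) → ℝ be a monotone nondecreasing partition with p 0 = q_min and p n = q_max. Define the set A of costs of P1-feasible solutions (vertex sequences v_0, …, v_m from a fixed start to a fixed goal together with charges q_0, …, q_m ∈ [q_min, q_max] with q_{k+1} ≤ min(q_max, q_k + β·d(v_k, v_{k+1})) for all k, with cost Σ_k c(q_k, q_{k+1}) where c(q_i, q_j) := c_f·d·max(0, (q_j − q_i + α d)/((α + β) d)) on an edge of length d), and the set B of costs of P3-feasible solutions (the same vertex-sequence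 constraints, with charges replaced by partition indices i_0, …, i_m, each relaxed edge feasible and costed with departure charge p(i_k + 1) and arrival charge p(i_{k+1})). If A is nonempty, then B is nonempty and the infimum of B is less than or equal to the infimum of A; that is, the optimal value of the relaxed problem P3 is a lower bound on the optimal value of the original problem P1. -/
/-- The set of costs of P1-feasible solutions: vertex sequences from `s` to `t` together
with a continuous charge profile taking values in `[qmin, qmax]` and satisfying the
battery feasibility condition on every edge. -/
def P1costs {V : Type*} (α β cf qmin qmax : ℝ) (d : V → V → ℝ) (s t : V) : Set ℝ :=
  {x | ∃ (m : ℕ) (v : Fin (m + 1) → V) (q : Fin (m + 1) → ℝ),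
    v 0 = s ∧ v (Fin.last m) = t ∧
    (∀ k, q k ∈ Set.Icc qmin qmax) ∧
    (∀ k : Fin m, q k.succ ≤ min qmax (q k.castSucc + β * d (v k.castSucc) (v k.succ))) ∧
    x = ∑ k : Fin m, cf * d (v k.castSucc) (v k.succ) *
      max 0 ((q k.succ - q k.castSucc + α * d (v k.castSucc) (v k.succ)) /
        ((α + β) * d (v k.castSucc) (v k.succ)))}

/-- The set of costs of P3-feasible solutions of the lower-bounding relaxation: vertex
sequences from `s` to `t` together with partition indices; each relaxed edge departs at the
upper endpoint `p(i_k + 1)` of its sub-interval and arrives at the lower endpoint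
`p(i_{k+1})` of the next sub-interval, subject to the battery feasibility condition. -/
def P3costs {V : Type*} (α β cf qmax : ℝ) (d : V → V → ℝ) (s t : V)
    {n : ℕ} (p : Fin (n + 1) → ℝ) : Set ℝ :=
  {x | ∃ (m : ℕ) (v : Fin (m + 1) → V) (i : Fin (m + 1) → Fin n),
    v 0 = s ∧ v (Fin.last m) = t ∧
    (∀ k : Fin m, p (i k.succ).castSucc ≤
      min qmax (p (i k.castSucc).succ + β * d (v k.castSucc) (v k.succ))) ∧
    x = ∑ k : Fin m, cf * d (v k.castSucc) (v k.succ) *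
      max 0 ((p (i k.succ).castSucc - p (i k.castSucc).succ +
          α * d (v k.castSucc) (v k.succ)) /
        ((α + β) * d (v k.castSucc) (v k.succ)))}


private lemma exists_subinterval {n : ℕ} (hn : 0 < n) (p : Fin (n+1) → ℝ) (hp : Monotone p)
    {q : ℝ} (h0 : p 0 ≤ q) (hl : q ≤ p (Fin.last n)) :
    ∃ i : Fin n, p i.castSucc ≤ q ∧ q ≤ p i.succ := by
  classical
  set S : Finset (Fin (n+1)) := Finset.univ.filter (fun j => p j ≤ q) with hS
  have h0S : (0 : Fin (n+1)) ∈ S := by simp [hS, h0]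
  have hne : S.Nonempty := ⟨0, h0S⟩
  set j := S.max' hne with hj
  have hjS : j ∈ S := S.max'_mem hne
  have hpj : p j ≤ q := by simpa [hS] using hjS
  by_cases hlast : j = Fin.last n
  · refine ⟨⟨n - 1, by omega⟩, ?_, ?_⟩
    · have hq : q = p (Fin.last n) := le_antisymm hl (hlast ▸ hpj)
      exact (hp (Fin.le_last _)).trans hq.ge
    · have hs : Fin.succ (⟨n-1, by omega⟩ : Fin n) = Fin.last n := by
        ext; simp [Fin.succ, Fin.last]; omega
      rw [hs]; exact hl
  · have hjlt : (j : ℕ) < n := by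
      have h1 := j.isLt
      rcases Nat.lt_or_ge (j : ℕ) n with h | h
      · exact h
      · exact absurd (Fin.ext (by rw [Fin.val_last]; omega : (j:ℕ) = (Fin.last n : Fin (n+1)))) hlast
    refine ⟨⟨j, hjlt⟩, ?_, ?_⟩
    · have hc : Fin.castSucc (⟨j, hjlt⟩ : Fin n) = j := by ext; simp
      rw [hc]; exact hpj
    · by_contra hc
      push_neg at hc
      have hmem : Fin.succ (⟨j, hjlt⟩ : Fin n) ∈ S := by
        simp only [hS, Finset.mem_filter, Finset.mem_univ, true_and]
        exact hc.le
      have hle := S.le_max' _ hmem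
      rw [← hj] at hle
      have : (j : ℕ) + 1 ≤ (j : ℕ) := by simp only [Fin.le_def] at hle; exact hle
      omega

/-- If the set `A` of costs of P1-feasible solutions is nonempty, then the set
`B` of costs of P3-feasible solutions is nonempty and `inf B ≤ inf A`: the optimal value of
the relaxed problem P3 is a lower bound on the optimal value of the original problem P1. -/
theorem relaxed_optimum_is_lower_bound
    {V : Type*} [Fintype V] (α β cf qmin qmax : ℝ)
    (hα : 0 < α) (hβ : 0 < β) (hcf : 0 < cf) (hq' : qmin < qmax)
    (d : V → V → ℝ) (hd : ∀ u v, 0 < d u v) (s t : V)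
    (n : ℕ) (p : Fin (n + 1) → ℝ) (hp : Monotone p)
    (hp0 : p 0 = qmin) (hpn : p (Fin.last n) = qmax)
    (hA : (P1costs α β cf qmin qmax d s t).Nonempty) :
    (P3costs α β cf qmax d s t p).Nonempty ∧
      sInf (P3costs α β cf qmax d s t p) ≤ sInf (P1costs α β cf qmin qmax d s t) := by
  classical
  have hn : 0 < n := by
    rcases Nat.eq_zero_or_pos n with h | h
    · subst h
      have : qmin = qmax := by rw [← hp0, ← hpn]; rfl
      exact absurd this (ne_of_lt hq')
    · exact h
  have nonnegA : ∀ x ∈ P1costs α β cf qmin qmax d s t, 0 ≤ x := by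
    rintro x ⟨m, v, q, -, -, -, -, rfl⟩
    apply Finset.sum_nonneg
    intro k _
    have := (hd (v k.castSucc) (v k.succ))
    positivity
  have nonnegB : ∀ x ∈ P3costs α β cf qmax d s t p, 0 ≤ x := by
    rintro x ⟨m, v, i, -, -, -, rfl⟩
    apply Finset.sum_nonneg
    intro k _
    have := (hd (v k.castSucc) (v k.succ))
    positivity
  have key : ∀ x ∈ P1costs α β cf qmin qmax d s t,
      ∃ y ∈ P3costs α β cf qmax d s t p, y ≤ x := by
    rintro x ⟨m, v, q, hv0, hvl, hqIcc, hfeas, rfl⟩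
    choose i hi1 hi2 using fun k : Fin (m+1) =>
      exists_subinterval hn p hp (q := q k)
        (show p 0 ≤ q k by rw [hp0]; exact (hqIcc k).1)
        (show q k ≤ p (Fin.last n) by rw [hpn]; exact (hqIcc k).2)
    refine ⟨_, ⟨m, v, i, hv0, hvl, ?_, rfl⟩, ?_⟩
    · intro k
      calc p (i k.succ).castSucc ≤ q k.succ := hi1 _
        _ ≤ min qmax (q k.castSucc + β * d (v k.castSucc) (v k.succ)) := hfeas k
        _ ≤ min qmax (p (i k.castSucc).succ + β * d (v k.castSucc) (v k.succ)) := by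
            apply min_le_min le_rfl
            have := hi2 k.castSucc
            linarith
    · apply Finset.sum_le_sum
      intro k _
      have hdk := hd (v k.castSucc) (v k.succ)
      apply mul_le_mul_of_nonneg_left _ (by positivity)
      apply max_le_max le_rfl
      have hnum : p (i k.succ).castSucc - p (i k.castSucc).succ
            + α * d (v k.castSucc) (v k.succ)
          ≤ q k.succ - q k.castSucc + α * d (v k.castSucc) (v k.succ) := by
        have h1 := hi1 k.succ
        have h2 := hi2 k.castSucc
        linarith
      exact div_le_div_of_nonneg_right hnum (by positivity)
  obtain ⟨x0, hx0⟩ := id hA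
  obtain ⟨y0, hy0, -⟩ := key x0 hx0
  have hBdd : BddBelow (P3costs α β cf qmax d s t p) := ⟨0, fun y hy => nonnegB y hy⟩
  refine ⟨⟨y0, hy0⟩, le_csInf hA fun x hx => ?_⟩
  obtain ⟨y, hy, hle⟩ := key x hx
  exact le_trans (csInf_le hBdd hy) hle
end
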